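/- arXiv:math-ph/0412032 — 3 statements merged into one kernel-verified Lean document; each statement's English description precedes it below -/
import Mathlib

section
/- (Kodaira decomposition) If S : H → H' and T : H' → H'' are densely defined closed operators with ran S ⊆ ker T, then H' decomposes as the orthogonal direct sum H' = closure(ran T*) ⊕ ker(T*T + SS*) ⊕ closure(ran S). -/
open scoped InnerProductSpace

variable {𝕜 H H' H'' : Type*} [RCLike 𝕜]
    [NormedAddCommGroup H] [InnerProductSpace 𝕜 H] [CompleteSpace H]
    [NormedAddCommGroup H'] [InnerProductSpace 𝕜 H'] [CompleteSpace H']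
    [NormedAddCommGroup H''] [InnerProductSpace 𝕜 H''] [CompleteSpace H'']

/-- The kernel of the "Laplacian" `T†T + SS†`, with domain the set of points where both
compositions are defined. -/
def lapKer (S : H →ₗ.[𝕜] H') (T : H' →ₗ.[𝕜] H'') : Set H' :=
  {v | ∃ (h1 : v ∈ T.domain) (h2 : T ⟨v, h1⟩ ∈ T.adjoint.domain)
      (h3 : v ∈ S.adjoint.domain) (h4 : S.adjoint ⟨v, h3⟩ ∈ S.domain),
      T.adjoint ⟨T ⟨v, h1⟩, h2⟩ + S ⟨S.adjoint ⟨v, h3⟩, h4⟩ = 0}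

/-- The range of a `LinearPMap` as a set. -/
def pRange {E F : Type*} [NormedAddCommGroup E] [InnerProductSpace 𝕜 E]
    [NormedAddCommGroup F] [InnerProductSpace 𝕜 F] (A : E →ₗ.[𝕜] F) : Set F :=
  Set.range fun x : A.domain => A x

section Aux

lemma aux_inner_left_closure {E : Type*} [NormedAddCommGroup E] [InnerProductSpace 𝕜 E]
    {s : Set E} {b : E} (h : ∀ x ∈ s, ⟪x, b⟫_𝕜 = 0) {a : E} (ha : a ∈ closure s) :
    ⟪a, b⟫_𝕜 = 0 := by
  have hc : IsClosed {x : E | ⟪x, b⟫_𝕜 = 0} :=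
    isClosed_eq (Continuous.inner continuous_id continuous_const) continuous_const
  exact closure_minimal h hc ha

lemma aux_inner_right_closure {E : Type*} [NormedAddCommGroup E] [InnerProductSpace 𝕜 E]
    {s : Set E} {b : E} (h : ∀ x ∈ s, ⟪b, x⟫_𝕜 = 0) {a : E} (ha : a ∈ closure s) :
    ⟪b, a⟫_𝕜 = 0 := by
  have := aux_inner_left_closure (𝕜 := 𝕜) (b := b)
    (fun x hx => by rw [← inner_conj_symm, h x hx, map_zero]) ha
  rw [← inner_conj_symm, this, map_zero]

/-- If `z` is orthogonal to the range of `T†` and `T` is densely defined and closed,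
then `z ∈ ker T`. -/
lemma aux_mem_ker {E F : Type*} [NormedAddCommGroup E] [InnerProductSpace 𝕜 E] [CompleteSpace E]
    [NormedAddCommGroup F] [InnerProductSpace 𝕜 F] [CompleteSpace F]
    (T : E →ₗ.[𝕜] F) (hT : Dense (T.domain : Set E)) (hTc : T.IsClosed)
    {z : E} (hz : ∀ w : T.adjoint.domain, ⟪(T.adjoint w : E), z⟫_𝕜 = 0) :
    ∃ h : z ∈ T.domain, T ⟨z, h⟩ = 0 := by
  classical
  set e : WithLp 2 (E × F) ≃L[𝕜] E × F := WithLp.prodContinuousLinearEquiv 2 𝕜 E F with he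
  set G : Submodule 𝕜 (WithLp 2 (E × F)) :=
    T.graph.comap (e.toLinearEquiv : WithLp 2 (E × F) →ₗ[𝕜] E × F) with hG
  have hGmem : ∀ x : WithLp 2 (E × F), x ∈ G ↔ e x ∈ T.graph := fun x => Iff.rfl
  have hGclosed : IsClosed (G : Set (WithLp 2 (E × F))) := hTc.preimage e.continuous
  have hGG : Gᗮᗮ = G := by
    rw [Submodule.orthogonal_orthogonal_eq_closure]
    exact hGclosed.submodule_topologicalClosure_eq
  set zz : WithLp 2 (E × F) := e.symm (z, 0) with hzz
  have hzzG : zz ∈ G := by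
    rw [← hGG, Submodule.mem_orthogonal]
    intro u hu
    rw [Submodule.mem_orthogonal] at hu
    set u1 : E := (e u).1 with hu1
    set u2 : F := (e u).2 with hu2
    have key : ∀ x : T.domain, ⟪(x : E), u1⟫_𝕜 + ⟪T x, u2⟫_𝕜 = 0 := by
      intro x
      have hg : e.symm ((x : E), T x) ∈ G := by
        rw [hGmem]
        simpa using T.mem_graph x
      have h0 := hu _ hg
      rw [WithLp.prod_inner_apply] at h0
      exact h0
    have key' : ∀ x : T.domain, ⟪-u1, (x : E)⟫_𝕜 = ⟪u2, T x⟫_𝕜 := by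
      intro x
      have h1 := congrArg (starRingEnd 𝕜) (key x)
      simp only [map_add, inner_conj_symm, map_zero] at h1
      rw [inner_neg_left]
      linear_combination -h1
    have hu2dom : u2 ∈ T.adjoint.domain :=
      LinearPMap.mem_adjoint_domain_of_exists u2 ⟨-u1, key'⟩
    have hadj : T.adjoint ⟨u2, hu2dom⟩ = -u1 :=
      LinearPMap.adjoint_apply_eq hT ⟨u2, hu2dom⟩ key'
    have h2 : ⟪u, zz⟫_𝕜 = ⟪u1, z⟫_𝕜 := by
      rw [WithLp.prod_inner_apply]
      show ⟪u1, z⟫_𝕜 + ⟪u2, (0 : F)⟫_𝕜 = ⟪u1, z⟫_𝕜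
      rw [inner_zero_right, add_zero]
    rw [h2]
    have h3 := hz ⟨u2, hu2dom⟩
    rw [hadj, inner_neg_left, neg_eq_zero] at h3
    exact h3
  rw [hGmem] at hzzG
  simp only [hzz, ContinuousLinearEquiv.apply_symm_apply, LinearPMap.mem_graph_iff] at hzzG
  obtain ⟨y, hy1, hy2⟩ := hzzG
  have hzd : z ∈ T.domain := by rw [← hy1]; exact y.2
  refine ⟨hzd, ?_⟩
  have : (⟨z, hzd⟩ : T.domain) = y := Subtype.ext hy1.symm
  rw [this, hy2]

/-- Elements of `lapKer` are in `ker T ∩ ker S†`. -/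
lemma aux_lapKer_spec (S : H →ₗ.[𝕜] H') (T : H' →ₗ.[𝕜] H'')
    (hS : Dense (S.domain : Set H)) (hT : Dense (T.domain : Set H'))
    {b : H'} (hb : b ∈ lapKer S T) :
    ∃ (h1 : b ∈ T.domain) (h3 : b ∈ S.adjoint.domain),
      T ⟨b, h1⟩ = 0 ∧ S.adjoint ⟨b, h3⟩ = 0 := by
  obtain ⟨h1, h2, h3, h4, heq⟩ := hb
  have hfT := LinearPMap.adjoint_isFormalAdjoint hT
  have hfS := LinearPMap.adjoint_isFormalAdjoint hS
  have e1 : ⟪(T.adjoint ⟨T ⟨b, h1⟩, h2⟩ : H'), b⟫_𝕜 = ⟪T ⟨b, h1⟩, T ⟨b, h1⟩⟫_𝕜 :=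
    hfT ⟨T ⟨b, h1⟩, h2⟩ ⟨b, h1⟩
  have e2 : ⟪(S.adjoint ⟨b, h3⟩ : H), S.adjoint ⟨b, h3⟩⟫_𝕜
      = ⟪b, S ⟨S.adjoint ⟨b, h3⟩, h4⟩⟫_𝕜 := hfS ⟨b, h3⟩ ⟨S.adjoint ⟨b, h3⟩, h4⟩
  have e0 : ⟪(T.adjoint ⟨T ⟨b, h1⟩, h2⟩ : H') + S ⟨S.adjoint ⟨b, h3⟩, h4⟩, b⟫_𝕜 = 0 := by
    rw [heq, inner_zero_left]
  rw [inner_add_left, e1] at e0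
  have e2' : ⟪(S ⟨S.adjoint ⟨b, h3⟩, h4⟩ : H'), b⟫_𝕜
      = ⟪(S.adjoint ⟨b, h3⟩ : H), S.adjoint ⟨b, h3⟩⟫_𝕜 := by
    rw [← inner_conj_symm, ← e2, inner_conj_symm]
  rw [e2'] at e0
  have hre := congrArg RCLike.re e0
  rw [map_add, @inner_self_eq_norm_sq 𝕜, @inner_self_eq_norm_sq 𝕜, map_zero] at hre
  have hT0 : ‖T ⟨b, h1⟩‖ = 0 := by nlinarith [sq_nonneg ‖T ⟨b, h1⟩‖, sq_nonneg ‖(S.adjoint ⟨b, h3⟩ : H)‖]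
  have hS0 : ‖(S.adjoint ⟨b, h3⟩ : H)‖ = 0 := by nlinarith [sq_nonneg ‖T ⟨b, h1⟩‖, sq_nonneg ‖(S.adjoint ⟨b, h3⟩ : H)‖]
  exact ⟨h1, h3, norm_eq_zero.mp hT0, norm_eq_zero.mp hS0⟩

end Aux

/-- (Kodaira decomposition) If `S : H → H'` and `T : H' → H''` are densely defined closed
operators with `ran S ⊆ ker T`, then `H'` is the orthogonal direct sum
`closure (ran T†) ⊕ ker (T†T + SS†) ⊕ closure (ran S)`. -/
theorem stmt3 (S : H →ₗ.[𝕜] H') (T : H' →ₗ.[𝕜] H'')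
    (hS : Dense (S.domain : Set H)) (hT : Dense (T.domain : Set H'))
    (hSc : S.IsClosed) (hTc : T.IsClosed)
    (hST : ∀ x : S.domain, ∃ hx : S x ∈ T.domain, T ⟨S x, hx⟩ = 0) :
    (∀ a ∈ closure (pRange T.adjoint), ∀ b ∈ lapKer S T, ⟪a, b⟫_𝕜 = 0) ∧
    (∀ a ∈ closure (pRange T.adjoint), ∀ c ∈ closure (pRange S), ⟪a, c⟫_𝕜 = 0) ∧
    (∀ b ∈ lapKer S T, ∀ c ∈ closure (pRange S), ⟪b, c⟫_𝕜 = 0) ∧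
    (∀ v : H', ∃ a ∈ closure (pRange T.adjoint), ∃ b ∈ lapKer S T,
      ∃ c ∈ closure (pRange S), v = a + b + c) := by
  have hfT := LinearPMap.adjoint_isFormalAdjoint hT
  have hfS := LinearPMap.adjoint_isFormalAdjoint hS
  -- orthogonality of ran T† and ran S
  have hTperp : ∀ (w : T.adjoint.domain) (x : S.domain), ⟪(T.adjoint w : H'), S x⟫_𝕜 = 0 := by
    intro w x
    obtain ⟨hx, hx0⟩ := hST x
    have h := hfT w ⟨S x, hx⟩
    rw [hx0, inner_zero_right] at h
    exact h
  refine ⟨?_, ?_, ?_, ?_⟩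
  · -- (1)
    intro a ha b hb
    obtain ⟨h1, h3, hT0, hS0⟩ := aux_lapKer_spec S T hS hT hb
    refine aux_inner_left_closure ?_ ha
    rintro x ⟨w, rfl⟩
    have h := hfT w ⟨b, h1⟩
    rw [hT0, inner_zero_right] at h
    exact h
  · -- (2)
    intro a ha c hc
    refine aux_inner_right_closure ?_ hc
    rintro y ⟨x, rfl⟩
    refine aux_inner_left_closure ?_ ha
    rintro z ⟨w, rfl⟩
    exact hTperp w x
  · -- (3)
    intro b hb c hc
    obtain ⟨h1, h3, hT0, hS0⟩ := aux_lapKer_spec S T hS hT hb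
    refine aux_inner_right_closure ?_ hc
    rintro y ⟨x, rfl⟩
    have h := hfS ⟨b, h3⟩ x
    rw [hS0, inner_zero_left] at h
    exact h.symm
  · -- (4) existence of the decomposition
    intro v
    set M0 : Submodule 𝕜 H' := LinearMap.range T.adjoint.toFun with hM0def
    have hM0 : (M0 : Set H') = pRange T.adjoint := by
      rw [hM0def, LinearMap.coe_range]; rfl
    set K0 : Submodule 𝕜 H' := LinearMap.range S.toFun with hK0def
    have hK0 : (K0 : Set H') = pRange S := by
      rw [hK0def, LinearMap.coe_range]; rfl
    set M : Submodule 𝕜 H' := M0.topologicalClosure with hMdef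
    set K : Submodule 𝕜 H' := K0.topologicalClosure with hKdef
    have hMc : (M : Set H') = closure (pRange T.adjoint) := by
      rw [hMdef, Submodule.topologicalClosure_coe, hM0]
    have hKc : (K : Set H') = closure (pRange S) := by
      rw [hKdef, Submodule.topologicalClosure_coe, hK0]
    haveI : CompleteSpace M := M0.isClosed_topologicalClosure.completeSpace_coe
    haveI : CompleteSpace K := K0.isClosed_topologicalClosure.completeSpace_coe
    obtain ⟨a, haM, u, huM, hvu⟩ := M.exists_add_mem_mem_orthogonal v
    obtain ⟨c, hcK, b, hbK, huc⟩ := K.exists_add_mem_mem_orthogonal u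
    have hKM0 : K ≤ M0ᗮ := by
      refine K0.topologicalClosure_minimal ?_ M0.isClosed_orthogonal
      rintro y ⟨x, rfl⟩
      rw [Submodule.mem_orthogonal]
      rintro z ⟨w, rfl⟩
      exact hTperp w x
    have huM0 : u ∈ M0ᗮ := Submodule.orthogonal_le M0.le_topologicalClosure huM
    have hbM0 : b ∈ M0ᗮ := by
      have hbuc : b = u - c := by rw [huc]; abel
      rw [hbuc]
      exact sub_mem huM0 (hKM0 hcK)
    obtain ⟨hb1, hb10⟩ := aux_mem_ker T hT hTc
      (fun w => (Submodule.mem_orthogonal _ _).mp hbM0 _ ⟨w, rfl⟩)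
    have hbK0 : ∀ x : S.domain, ⟪S x, b⟫_𝕜 = 0 := fun x =>
      (Submodule.mem_orthogonal _ _).mp
        (Submodule.orthogonal_le K0.le_topologicalClosure hbK) _ ⟨x, rfl⟩
    have hbS : ∀ x : S.domain, ⟪(0 : H), (x : H)⟫_𝕜 = ⟪b, S x⟫_𝕜 := by
      intro x
      rw [inner_zero_left, ← inner_conj_symm, hbK0 x, map_zero]
    have hb3 : b ∈ S.adjoint.domain :=
      LinearPMap.mem_adjoint_domain_of_exists b ⟨0, hbS⟩
    have hb30 : S.adjoint ⟨b, hb3⟩ = 0 :=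
      LinearPMap.adjoint_apply_eq hS ⟨b, hb3⟩ hbS
    have h2 : T ⟨b, hb1⟩ ∈ T.adjoint.domain := by rw [hb10]; exact zero_mem _
    have h4 : S.adjoint ⟨b, hb3⟩ ∈ S.domain := by rw [hb30]; exact zero_mem _
    have hTT : T.adjoint ⟨T ⟨b, hb1⟩, h2⟩ = 0 := by
      have h : (⟨T ⟨b, hb1⟩, h2⟩ : T.adjoint.domain) = 0 := Subtype.ext hb10
      rw [h]
      exact T.adjoint.map_zero
    have hSS : S ⟨S.adjoint ⟨b, hb3⟩, h4⟩ = 0 := by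
      have h : (⟨S.adjoint ⟨b, hb3⟩, h4⟩ : S.domain) = 0 := Subtype.ext hb30
      rw [h]
      exact S.map_zero
    refine ⟨a, ?_, b, ⟨hb1, h2, hb3, h4, by rw [hTT, hSS, add_zero]⟩, c, ?_, ?_⟩
    · rw [← hMc]; exact haM
    · rw [← hKc]; exact hcK
    · rw [hvu, huc]; abel
end

section
/- If S : H → H' and T : H' → H'' are densely defined closed operators with ran S ⊆ ker T, then ker(T*T + SS*) = ker T ∩ ker S*. -/
/-- If `S : H → H'` and `T : H' → H''` are densely defined closed operators with
`ran S ⊆ ker T`, then `ker (T†T + SS†) = ker T ∩ ker S†`. -/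
theorem stmt4 {𝕜 H H' H'' : Type*} [RCLike 𝕜]
    [NormedAddCommGroup H] [InnerProductSpace 𝕜 H] [CompleteSpace H]
    [NormedAddCommGroup H'] [InnerProductSpace 𝕜 H'] [CompleteSpace H']
    [NormedAddCommGroup H''] [InnerProductSpace 𝕜 H''] [CompleteSpace H'']
    (S : H →ₗ.[𝕜] H') (T : H' →ₗ.[𝕜] H'')
    (hS : Dense (S.domain : Set H)) (hT : Dense (T.domain : Set H'))
    (hSc : S.IsClosed) (hTc : T.IsClosed)
    (hST : ∀ x : S.domain, ∃ hx : S x ∈ T.domain, T ⟨S x, hx⟩ = 0) :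
    {v : H' | ∃ (h1 : v ∈ T.domain) (h2 : T ⟨v, h1⟩ ∈ T.adjoint.domain)
        (h3 : v ∈ S.adjoint.domain) (h4 : S.adjoint ⟨v, h3⟩ ∈ S.domain),
        T.adjoint ⟨T ⟨v, h1⟩, h2⟩ + S ⟨S.adjoint ⟨v, h3⟩, h4⟩ = 0} =
      {v : H' | ∃ h1 : v ∈ T.domain, T ⟨v, h1⟩ = 0} ∩
      {v : H' | ∃ h3 : v ∈ S.adjoint.domain, S.adjoint ⟨v, h3⟩ = 0} := by
  ext v
  constructor
  · rintro ⟨h1, h2, h3, h4, heq⟩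
    have key : (inner 𝕜 (T.adjoint ⟨T ⟨v, h1⟩, h2⟩ + S ⟨S.adjoint ⟨v, h3⟩, h4⟩) v : 𝕜) = 0 := by
      rw [heq, inner_zero_left]
    rw [inner_add_left] at key
    have e1 : (inner 𝕜 (T.adjoint ⟨T ⟨v, h1⟩, h2⟩) v : 𝕜) = inner 𝕜 (T ⟨v, h1⟩) (T ⟨v, h1⟩) :=
      T.adjoint_isFormalAdjoint hT ⟨T ⟨v, h1⟩, h2⟩ ⟨v, h1⟩
    have e2 : (inner 𝕜 (S ⟨S.adjoint ⟨v, h3⟩, h4⟩) v : 𝕜)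
        = inner 𝕜 (S.adjoint ⟨v, h3⟩) (S.adjoint ⟨v, h3⟩) :=
      (S.adjoint_isFormalAdjoint hS).symm ⟨S.adjoint ⟨v, h3⟩, h4⟩ ⟨v, h3⟩
    rw [e1, e2] at key
    have key' : ‖T ⟨v, h1⟩‖ ^ 2 + ‖S.adjoint ⟨v, h3⟩‖ ^ 2 = 0 := by
      have := congrArg (RCLike.re : 𝕜 → ℝ) key
      simpa [inner_self_eq_norm_sq] using this
    have hT0 : T ⟨v, h1⟩ = 0 := by
      have h : ‖T ⟨v, h1⟩‖ = 0 := by nlinarith [sq_nonneg ‖T ⟨v, h1⟩‖, sq_nonneg ‖S.adjoint ⟨v, h3⟩‖, norm_nonneg (T ⟨v, h1⟩), norm_nonneg (S.adjoint ⟨v, h3⟩)]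
      simpa using h
    have hS0 : S.adjoint ⟨v, h3⟩ = 0 := by
      have h : ‖S.adjoint ⟨v, h3⟩‖ = 0 := by nlinarith [sq_nonneg ‖T ⟨v, h1⟩‖, sq_nonneg ‖S.adjoint ⟨v, h3⟩‖, norm_nonneg (T ⟨v, h1⟩), norm_nonneg (S.adjoint ⟨v, h3⟩)]
      simpa using h
    exact ⟨⟨h1, hT0⟩, ⟨h3, hS0⟩⟩
  · rintro ⟨⟨h1, hT0⟩, ⟨h3, hS0⟩⟩
    have h2 : T ⟨v, h1⟩ ∈ T.adjoint.domain := by rw [hT0]; exact zero_mem _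
    have h4 : S.adjoint ⟨v, h3⟩ ∈ S.domain := by rw [hS0]; exact zero_mem _
    refine ⟨h1, h2, h3, h4, ?_⟩
    have e1 : (⟨T ⟨v, h1⟩, h2⟩ : T.adjoint.domain) = 0 := Subtype.ext hT0
    have e2 : (⟨S.adjoint ⟨v, h3⟩, h4⟩ : S.domain) = 0 := Subtype.ext hS0
    rw [e1, e2]; simp
end

section
/- Let A : H₁ → H₂ and B : H₂ → H₁ be densely defined operators that are formal adjoints of one another (⟨Aφ, ψ⟩ = ⟨φ, Bψ⟩ for φ ∈ dom A, ψ ∈ dom B). If the operator S on H₁ ⊕ H₂ given by the block matrix [[0, B],[A, 0]] is essentially self-adjoint, then the closures of A and B are mutually adjoint: (closure A)* = closure B and (closure B)* = closure A. -/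
open scoped InnerProductSpace

namespace Stmt6Helpers

open LinearPMap

variable {𝕜 E F : Type*} [RCLike 𝕜]
  [NormedAddCommGroup E] [InnerProductSpace 𝕜 E] [CompleteSpace E]
  [NormedAddCommGroup F] [InnerProductSpace 𝕜 F]

theorem mem_graph_adjoint_iff {T : E →ₗ.[𝕜] F} (hT : Dense (T.domain : Set E))
    {y : F} {w : E} :
    (y, w) ∈ T.adjoint.graph ↔ ∀ x : T.domain, ⟪w, (x : E)⟫_𝕜 = ⟪y, T x⟫_𝕜 := by
  constructor
  · rintro h x
    rcases (mem_graph_iff _).mp h with ⟨y', h1, h2⟩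
    dsimp at h1 h2
    subst h1
    rw [← h2]
    exact adjoint_isFormalAdjoint hT y' x
  · intro h
    have hy : y ∈ T.adjoint.domain := mem_adjoint_domain_of_exists _ ⟨w, h⟩
    have happ : T.adjoint ⟨y, hy⟩ = w := adjoint_apply_eq hT ⟨y, hy⟩ h
    exact (mem_graph_iff _).mpr ⟨⟨y, hy⟩, rfl, happ⟩

theorem adjoint_isClosed' {T : E →ₗ.[𝕜] F} (hT : Dense (T.domain : Set E)) :
    T.adjoint.IsClosed := by
  have hset : (T.adjoint.graph : Set (F × E)) =
      ⋂ x : T.domain, {p : F × E | ⟪p.2, (x : E)⟫_𝕜 = ⟪p.1, T x⟫_𝕜} := by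
    ext ⟨y, w⟩
    simp only [SetLike.mem_coe, Set.mem_iInter, Set.mem_setOf_eq]
    exact mem_graph_adjoint_iff hT
  rw [LinearPMap.IsClosed, hset]
  exact isClosed_iInter fun x =>
    isClosed_eq (continuous_snd.inner continuous_const) (continuous_fst.inner continuous_const)

theorem adjoint_anti {T U : E →ₗ.[𝕜] F} (hT : Dense (T.domain : Set E)) (h : T ≤ U) :
    U.adjoint ≤ T.adjoint := by
  have hU : Dense (U.domain : Set E) := hT.mono h.1
  apply le_of_le_graph
  rintro ⟨y, w⟩ hp
  rw [mem_graph_adjoint_iff hU] at hp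
  rw [mem_graph_adjoint_iff hT]
  intro x
  have hx : (x : E) ∈ U.domain := h.1 x.2
  have heq : T x = U ⟨(x : E), hx⟩ := h.2 rfl
  have := hp ⟨(x : E), hx⟩
  rwa [← heq] at this

theorem closure_eq_self {T : E →ₗ.[𝕜] F} (h : T.IsClosed) : T.closure = T := by
  apply eq_of_eq_graph
  rw [← h.isClosable.graph_closure_eq_closure_graph]
  exact IsClosed.submodule_topologicalClosure_eq h

theorem adjoint_closure {T : E →ₗ.[𝕜] F} (hT : Dense (T.domain : Set E)) (hc : T.IsClosable) :
    T.closure.adjoint = T.adjoint := by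
  have hTc : Dense (T.closure.domain : Set E) := hT.mono (le_closure T).1
  refine le_antisymm (adjoint_anti hT (le_closure T)) ?_
  apply le_of_le_graph
  rintro ⟨y, w⟩ hp
  rw [mem_graph_adjoint_iff hT] at hp
  rw [mem_graph_adjoint_iff hTc]
  intro x
  have hx : ((x : E), T.closure x) ∈ _root_.closure (T.graph : Set (E × F)) := by
    rw [← Submodule.topologicalClosure_coe]
    have := T.closure.mem_graph x
    rw [← hc.graph_closure_eq_closure_graph] at this
    exact this
  have hsub : _root_.closure (T.graph : Set (E × F)) ⊆
      {p : E × F | ⟪w, p.1⟫_𝕜 = ⟪y, p.2⟫_𝕜} := by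
    apply closure_minimal
    · rintro ⟨u, v⟩ hq
      rcases (mem_graph_iff _).mp hq with ⟨z, h1, h2⟩
      dsimp only at h1 h2 ⊢
      subst h1
      rw [← h2]
      exact hp z
    · exact isClosed_eq (continuous_const.inner continuous_fst)
        (continuous_const.inner continuous_snd)
  exact hsub hx

end Stmt6Helpers

open LinearPMap Stmt6Helpers

/-- Let `A : H₁ → H₂` and `B : H₂ → H₁` be densely defined operators that are formal
adjoints of one another.  If the operator `S` on `H₁ ⊕ H₂` given by the block matrix
`[[0, B], [A, 0]]` is essentially self-adjoint, then the closures of `A` and `B` are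
mutually adjoint: `(closure A)† = closure B` and `(closure B)† = closure A`. -/
theorem stmt6 {𝕜 H₁ H₂ : Type*} [RCLike 𝕜]
    [NormedAddCommGroup H₁] [InnerProductSpace 𝕜 H₁] [CompleteSpace H₁]
    [NormedAddCommGroup H₂] [InnerProductSpace 𝕜 H₂] [CompleteSpace H₂]
    (A : H₁ →ₗ.[𝕜] H₂) (B : H₂ →ₗ.[𝕜] H₁)
    (hA : Dense (A.domain : Set H₁)) (hB : Dense (B.domain : Set H₂))
    (hAB : ∀ (x : A.domain) (y : B.domain), ⟪A x, (y : H₂)⟫_𝕜 = ⟪(x : H₁), B y⟫_𝕜)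
    (S : WithLp 2 (H₁ × H₂) →ₗ.[𝕜] WithLp 2 (H₁ × H₂))
    (hSdom : ∀ p : WithLp 2 (H₁ × H₂), p ∈ S.domain ↔
      (WithLp.equiv 2 (H₁ × H₂) p).1 ∈ A.domain ∧ (WithLp.equiv 2 (H₁ × H₂) p).2 ∈ B.domain)
    (hSapply : ∀ (p : S.domain)
      (h₁ : (WithLp.equiv 2 (H₁ × H₂) (p : WithLp 2 (H₁ × H₂))).1 ∈ A.domain)
      (h₂ : (WithLp.equiv 2 (H₁ × H₂) (p : WithLp 2 (H₁ × H₂))).2 ∈ B.domain),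
      WithLp.equiv 2 (H₁ × H₂) (S p) =
        (B ⟨(WithLp.equiv 2 (H₁ × H₂) (p : WithLp 2 (H₁ × H₂))).2, h₂⟩,
         A ⟨(WithLp.equiv 2 (H₁ × H₂) (p : WithLp 2 (H₁ × H₂))).1, h₁⟩))
    (hScl : S.IsClosable) (hSsa : IsSelfAdjoint S.closure) :
    A.closure.adjoint = B.closure ∧ B.closure.adjoint = A.closure := by
  classical
  set K := WithLp 2 (H₁ × H₂) with hK
  set e : K ≃L[𝕜] H₁ × H₂ := WithLp.prodContinuousLinearEquiv 2 𝕜 H₁ H₂ with he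
  have hFA : A.IsFormalAdjoint B := hAB
  have hBleA : B ≤ A.adjoint := hFA.le_adjoint hA
  have hAleB : A ≤ B.adjoint := hFA.symm.le_adjoint hB
  have hAadjClosed : A.adjoint.IsClosed := adjoint_isClosed' hA
  have hBadjClosed : B.adjoint.IsClosed := adjoint_isClosed' hB
  have hAc : A.IsClosable := hBadjClosed.isClosable.leIsClosable hAleB
  have hBc : B.IsClosable := hAadjClosed.isClosable.leIsClosable hBleA
  -- density of the domain of `S`
  have hSdense : Dense (S.domain : Set K) := by
    have hprod : Dense ((A.domain : Set H₁) ×ˢ (B.domain : Set H₂)) := hA.prod hB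
    have himg : (e.symm : H₁ × H₂ → K) '' ((A.domain : Set H₁) ×ˢ (B.domain : Set H₂))
        = (S.domain : Set K) := by
      ext p
      constructor
      · rintro ⟨q, hq, rfl⟩
        exact (hSdom _).mpr ⟨hq.1, hq.2⟩
      · intro hp
        exact ⟨e p, ⟨((hSdom p).mp hp).1, ((hSdom p).mp hp).2⟩, rfl⟩
    rw [← himg]
    exact (e.symm.surjective.denseRange).dense_image e.symm.continuous hprod
  -- `S.adjoint = S.closure`
  have hSeq : S.adjoint = S.closure := by
    have h2 : S.closure.adjoint = S.adjoint := adjoint_closure hSdense hScl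
    rw [← h2]
    exact LinearPMap.isSelfAdjoint_def.mp hSsa
  -- key inclusion 1 : `B.adjoint ≤ A.closure`
  have hkey1 : B.adjoint ≤ A.closure := by
    apply le_of_le_graph
    rintro ⟨x, w⟩ hp
    rw [mem_graph_adjoint_iff hB] at hp
    have hmem : ((e.symm (x, 0) : K), (e.symm (0, w) : K)) ∈ S.adjoint.graph := by
      rw [mem_graph_adjoint_iff hSdense]
      intro p
      have h₁ := ((hSdom (p : K)).mp p.2).1
      have h₂ := ((hSdom (p : K)).mp p.2).2
      have hSp : (S p : K) = e.symm (B ⟨(WithLp.equiv 2 (H₁ × H₂) (p : K)).2, h₂⟩,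
          A ⟨(WithLp.equiv 2 (H₁ × H₂) (p : K)).1, h₁⟩) := by
          rw [← hSapply p h₁ h₂]; rfl
      rw [WithLp.prod_inner_apply, WithLp.prod_inner_apply, hSp]
      show (⟪(0 : H₁), _⟫_𝕜 + ⟪w, (WithLp.equiv 2 (H₁ × H₂) (p : K)).2⟫_𝕜)
          = ⟪x, B ⟨(WithLp.equiv 2 (H₁ × H₂) (p : K)).2, h₂⟩⟫_𝕜 + ⟪(0 : H₂), _⟫_𝕜
      rw [inner_zero_left, inner_zero_left, zero_add, add_zero]
      exact hp ⟨(WithLp.equiv 2 (H₁ × H₂) (p : K)).2, h₂⟩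
    rw [hSeq, ← hScl.graph_closure_eq_closure_graph] at hmem
    have hmem' : ((e.symm (x, 0) : K), (e.symm (0, w) : K))
        ∈ _root_.closure (S.graph : Set (K × K)) := by
      rw [← Submodule.topologicalClosure_coe]; exact hmem
    set π : K × K → H₁ × H₂ := fun q => ((e q.1).1, (e q.2).2) with hπ
    have hπc : Continuous π :=
      (continuous_fst.comp (e.continuous.comp continuous_fst)).prodMk
        (continuous_snd.comp (e.continuous.comp continuous_snd))
    have himg : π '' (S.graph : Set (K × K)) ⊆ (A.graph : Set (H₁ × H₂)) := by
      rintro _ ⟨q, hq, rfl⟩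
      obtain ⟨q1, q2⟩ := q
      obtain ⟨z, h1, h2⟩ := (mem_graph_iff S).mp hq
      dsimp only at h1 h2
      subst h1; subst h2
      have h₁ := ((hSdom (z : K)).mp z.2).1
      have h₂ := ((hSdom (z : K)).mp z.2).2
      have hSp : (S z : K) = e.symm (B ⟨(WithLp.equiv 2 (H₁ × H₂) (z : K)).2, h₂⟩,
          A ⟨(WithLp.equiv 2 (H₁ × H₂) (z : K)).1, h₁⟩) := by
          rw [← hSapply z h₁ h₂]; rfl
      show ((e (z : K)).1, (e (S z)).2) ∈ A.graph
      rw [hSp]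
      exact A.mem_graph ⟨(WithLp.equiv 2 (H₁ × H₂) (z : K)).1, h₁⟩
    have hcl : _root_.closure (π '' (S.graph : Set (K × K))) ⊆ (A.closure.graph : Set _) := by
      rw [← hAc.graph_closure_eq_closure_graph, Submodule.topologicalClosure_coe]
      exact closure_mono himg
    have hx : π ((e.symm (x, 0) : K), (e.symm (0, w) : K))
        ∈ _root_.closure (π '' (S.graph : Set (K × K))) :=
      image_closure_subset_closure_image hπc ⟨_, hmem', rfl⟩
    exact hcl hx
  -- key inclusion 2 : `A.adjoint ≤ B.closure`
  have hkey2 : A.adjoint ≤ B.closure := by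
    apply le_of_le_graph
    rintro ⟨y, w⟩ hp
    rw [mem_graph_adjoint_iff hA] at hp
    have hmem : ((e.symm (0, y) : K), (e.symm (w, 0) : K)) ∈ S.adjoint.graph := by
      rw [mem_graph_adjoint_iff hSdense]
      intro p
      have h₁ := ((hSdom (p : K)).mp p.2).1
      have h₂ := ((hSdom (p : K)).mp p.2).2
      have hSp : (S p : K) = e.symm (B ⟨(WithLp.equiv 2 (H₁ × H₂) (p : K)).2, h₂⟩,
          A ⟨(WithLp.equiv 2 (H₁ × H₂) (p : K)).1, h₁⟩) := by
          rw [← hSapply p h₁ h₂]; rfl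
      rw [WithLp.prod_inner_apply, WithLp.prod_inner_apply, hSp]
      show (⟪w, (WithLp.equiv 2 (H₁ × H₂) (p : K)).1⟫_𝕜 + ⟪(0 : H₂), _⟫_𝕜)
          = ⟪(0 : H₁), _⟫_𝕜 + ⟪y, A ⟨(WithLp.equiv 2 (H₁ × H₂) (p : K)).1, h₁⟩⟫_𝕜
      rw [inner_zero_left, inner_zero_left, zero_add, add_zero]
      exact hp ⟨(WithLp.equiv 2 (H₁ × H₂) (p : K)).1, h₁⟩
    rw [hSeq, ← hScl.graph_closure_eq_closure_graph] at hmem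
    have hmem' : ((e.symm (0, y) : K), (e.symm (w, 0) : K))
        ∈ _root_.closure (S.graph : Set (K × K)) := by
      rw [← Submodule.topologicalClosure_coe]; exact hmem
    set π : K × K → H₂ × H₁ := fun q => ((e q.1).2, (e q.2).1) with hπ
    have hπc : Continuous π :=
      (continuous_snd.comp (e.continuous.comp continuous_fst)).prodMk
        (continuous_fst.comp (e.continuous.comp continuous_snd))
    have himg : π '' (S.graph : Set (K × K)) ⊆ (B.graph : Set (H₂ × H₁)) := by
      rintro _ ⟨q, hq, rfl⟩
      obtain ⟨q1, q2⟩ := q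
      obtain ⟨z, h1, h2⟩ := (mem_graph_iff S).mp hq
      dsimp only at h1 h2
      subst h1; subst h2
      have h₁ := ((hSdom (z : K)).mp z.2).1
      have h₂ := ((hSdom (z : K)).mp z.2).2
      have hSp : (S z : K) = e.symm (B ⟨(WithLp.equiv 2 (H₁ × H₂) (z : K)).2, h₂⟩,
          A ⟨(WithLp.equiv 2 (H₁ × H₂) (z : K)).1, h₁⟩) := by
          rw [← hSapply z h₁ h₂]; rfl
      show ((e (z : K)).2, (e (S z)).1) ∈ B.graph
      rw [hSp]
      exact B.mem_graph ⟨(WithLp.equiv 2 (H₁ × H₂) (z : K)).2, h₂⟩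
    have hcl : _root_.closure (π '' (S.graph : Set (K × K))) ⊆ (B.closure.graph : Set _) := by
      rw [← hBc.graph_closure_eq_closure_graph, Submodule.topologicalClosure_coe]
      exact closure_mono himg
    have hx : π ((e.symm (0, y) : K), (e.symm (w, 0) : K))
        ∈ _root_.closure (π '' (S.graph : Set (K × K))) :=
      image_closure_subset_closure_image hπc ⟨_, hmem', rfl⟩
    exact hcl hx
  constructor
  · rw [adjoint_closure hA hAc]
    refine le_antisymm hkey2 ?_
    have h := (hAadjClosed.isClosable).closure_mono hBleA
    rwa [closure_eq_self hAadjClosed] at h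
  · rw [adjoint_closure hB hBc]
    refine le_antisymm hkey1 ?_
    have h := (hBadjClosed.isClosable).closure_mono hAleB
    rwa [closure_eq_self hBadjClosed] at h
end
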